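/- For any partition λ, the co-transition measures sum to 1: Σ_{s ∈ A_λ} τ_λ^s = 1, where τ_λ^s = ∏_{t∈R⁺_λ}[s-t] / ∏_{s'∈A_λ, s'≠s}[s-s'], equivalently the partial fraction decomposition u^{-1}T_λ(u) = Σ_{s∈A_λ} τ_λ^s/(u-[s]) holds. -/
import Mathlib


noncomputable section

/-- The coefficient field `ℂ(ε₁,ε₂)`, realized as the fraction field of a polynomial
ring in two (transcendental) variables. -/
abbrev Kf : Type := FractionRing (MvPolynomial (Fin 2) ℚ)

/-- The equivariant parameter `ε₁`. -/
def eps1 : Kf := algebraMap (MvPolynomial (Fin 2) ℚ) Kf (MvPolynomial.X 0)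

/-- The equivariant parameter `ε₂`. -/
def eps2 : Kf := algebraMap (MvPolynomial (Fin 2) ℚ) Kf (MvPolynomial.X 1)

/-- The content `[b] = b₁ε₁ + b₂ε₂` of a box `b`. -/
def content (b : ℕ × ℕ) : Kf := (b.1 : Kf) * eps1 + (b.2 : Kf) * eps2

/-- The set `A_Y` of addable boxes (inner corners) of a Young diagram `Y`. -/
def addables (Y : YoungDiagram) : Finset (ℕ × ℕ) :=
  ((Finset.range (Y.cells.card + 1)) ×ˢ (Finset.range (Y.cells.card + 1))).filter
    (fun c => c ∉ Y.cells ∧ (c.1 = 0 ∨ (c.1 - 1, c.2) ∈ Y.cells) ∧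
      (c.2 = 0 ∨ (c.1, c.2 - 1) ∈ Y.cells))

/-- The set `R_Y` of removable boxes of a Young diagram `Y`. -/
def removables (Y : YoungDiagram) : Finset (ℕ × ℕ) :=
  Y.cells.filter fun c => (c.1 + 1, c.2) ∉ Y.cells ∧ (c.1, c.2 + 1) ∉ Y.cells

/-- The set `R⁺_Y = {t + (1,1) : t ∈ R_Y}` of outer corners of `Y`. -/
def outers (Y : YoungDiagram) : Finset (ℕ × ℕ) :=
  (removables Y).image fun c => (c.1 + 1, c.2 + 1)

/-- Kerov's co-transition measure
`τ_Y^a = ∏_{t∈R⁺_Y}[a-t] / ∏_{a'∈A_Y, a'≠a}[a-a']` at an addable box `a`. -/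
def tau (Y : YoungDiagram) (a : ℕ × ℕ) : Kf :=
  (∏ t ∈ outers Y, (content a - content t)) /
    ∏ a' ∈ (addables Y).erase a, (content a - content a')

/-- The rational-function field in the spectral variable `u` over `ℂ(ε₁,ε₂)`. -/
abbrev Fu : Type := RatFunc Kf

lemma content_injective : Function.Injective content := by
  intro a b hab
  unfold content eps1 eps2 at hab
  have h : algebraMap (MvPolynomial (Fin 2) ℚ) Kf
      ((a.1 : MvPolynomial (Fin 2) ℚ) * MvPolynomial.X 0 + (a.2 : MvPolynomial (Fin 2) ℚ) * MvPolynomial.X 1) =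
      algebraMap (MvPolynomial (Fin 2) ℚ) Kf
      ((b.1 : MvPolynomial (Fin 2) ℚ) * MvPolynomial.X 0 + (b.2 : MvPolynomial (Fin 2) ℚ) * MvPolynomial.X 1) := by
    push_cast
    simpa using hab
  have h2 := IsFractionRing.injective (MvPolynomial (Fin 2) ℚ) Kf h
  have e1 := congrArg (MvPolynomial.eval (fun i : Fin 2 => if i = 0 then (1:ℚ) else 0)) h2
  have e2 := congrArg (MvPolynomial.eval (fun i : Fin 2 => if i = 0 then (0:ℚ) else 1)) h2
  simp at e1 e2
  exact Prod.ext (by exact_mod_cast e1) (by exact_mod_cast e2)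

lemma rowLen_le_card (Y : YoungDiagram) (i : ℕ) : Y.rowLen i ≤ Y.cells.card := by
  rw [YoungDiagram.rowLen_eq_card]
  exact Finset.card_filter_le _ _

lemma colLen_le_card (Y : YoungDiagram) (j : ℕ) : Y.colLen j ≤ Y.cells.card := by
  rw [YoungDiagram.colLen_eq_card]
  exact Finset.card_filter_le _ _

lemma mem_addables_iff {Y : YoungDiagram} {i j : ℕ} :
    (i, j) ∈ addables Y ↔ j = Y.rowLen i ∧ (i = 0 ∨ Y.rowLen i < Y.rowLen (i-1)) := by
  simp only [addables, Finset.mem_filter, Finset.mem_product, Finset.mem_range,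
    YoungDiagram.mem_cells, YoungDiagram.mem_iff_lt_rowLen]
  constructor
  · rintro ⟨⟨hi, hj⟩, hnot, hrow, hcol⟩
    push_neg at hnot
    have hj' : j = Y.rowLen i := by
      rcases hcol with h0 | hc
      · omega
      · omega
    refine ⟨hj', ?_⟩
    rcases hrow with h0 | hr
    · exact Or.inl h0
    · exact Or.inr (by omega)
  · rintro ⟨rfl, hrow⟩
    have hjc : Y.rowLen i ≤ Y.cells.card := rowLen_le_card Y i
    have hic : i ≤ Y.cells.card := by
      rcases hrow with h0 | hr
      · omega
      · have : (i-1, 0) ∈ Y := by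
          rw [YoungDiagram.mem_iff_lt_rowLen]; omega
        rw [YoungDiagram.mem_iff_lt_colLen] at this
        have := colLen_le_card Y 0
        omega
    refine ⟨⟨by omega, by omega⟩, by omega, ?_, ?_⟩
    · rcases hrow with h0 | hr
      · exact Or.inl h0
      · exact Or.inr hr
    · rcases Nat.eq_zero_or_pos (Y.rowLen i) with h0 | hp
      · exact Or.inl h0
      · exact Or.inr (by omega)

lemma mem_removables_iff {Y : YoungDiagram} {i j : ℕ} :
    (i, j) ∈ removables Y ↔ j + 1 = Y.rowLen i ∧ Y.rowLen (i+1) < Y.rowLen i := by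
  simp only [removables, Finset.mem_filter, YoungDiagram.mem_cells,
    YoungDiagram.mem_iff_lt_rowLen]
  have := Y.rowLen_anti i (i+1) (by omega)
  omega

lemma card_addables (Y : YoungDiagram) :
    (addables Y).card = (outers Y).card + 1 := by
  have houters : (outers Y).card = (removables Y).card := by
    apply Finset.card_image_of_injOn
    intro a _ b _ h
    simpa [Prod.ext_iff] using h
  rw [houters]
  have hmem : (0, Y.rowLen 0) ∈ addables Y := mem_addables_iff.mpr ⟨rfl, Or.inl rfl⟩
  have hcard : ((addables Y).erase (0, Y.rowLen 0)).card = (removables Y).card := by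
    apply Finset.card_bij' (fun c _ => (c.1 - 1, Y.rowLen (c.1 - 1) - 1))
      (fun c _ => (c.1 + 1, Y.rowLen (c.1 + 1)))
    · rintro ⟨i, j⟩ hc
      rw [Finset.mem_erase, mem_addables_iff] at hc
      obtain ⟨hne, rfl, hrow⟩ := hc
      rcases hrow with h0 | hr
      · subst h0; simp at hne
      · have hi : i ≠ 0 := by rintro rfl; simp at hr
        dsimp only
        rw [mem_removables_iff]
        have h1 : i - 1 + 1 = i := by omega
        rw [h1]
        omega
    · rintro ⟨i, j⟩ hc
      rw [Finset.mem_erase, mem_addables_iff] at hc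
      obtain ⟨hne, rfl, hrow⟩ := hc
      have hi : i ≠ 0 := by rintro rfl; exact hne rfl
      dsimp only
      have h1 : i - 1 + 1 = i := by omega
      rw [h1]
    · rintro ⟨i, j⟩ hc
      rw [mem_removables_iff] at hc
      dsimp only
      have h1 : i + 1 - 1 = i := by omega
      rw [h1, Prod.mk.injEq]
      omega
    · rintro ⟨i, j⟩ hc
      rw [mem_removables_iff] at hc
      dsimp only
      rw [Finset.mem_erase, mem_addables_iff]
      refine ⟨by simp, rfl, Or.inr ?_⟩
      simpa using hc.2
  have h1 := Finset.card_erase_of_mem hmem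
  have h2 := Finset.card_pos.mpr ⟨_, hmem⟩
  omega


section
open Polynomial

lemma prod_erase_ne_zero (Y : YoungDiagram) (s : ℕ × ℕ) :
    ∏ a' ∈ (addables Y).erase s, (content s - content a') ≠ 0 := by
  rw [Finset.prod_ne_zero_iff]
  intro a' ha'
  have hne : a' ≠ s := (Finset.mem_erase.mp ha').1
  intro h
  exact hne (content_injective (sub_eq_zero.mp h)).symm

lemma key_identity (Y : YoungDiagram) :
    (∏ t ∈ outers Y, (X - C (_root_.content t)) : Kf[X]) =
      ∑ s ∈ addables Y, C (tau Y s) *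
        ∏ s' ∈ (addables Y).erase s, (X - C (_root_.content s')) := by
  classical
  have hinj : Function.Injective _root_.content := content_injective
  have hcard : ((addables Y).image _root_.content).card = (outers Y).card + 1 := by
    rw [Finset.card_image_of_injective _ hinj, card_addables]
  have hmonicN : (∏ t ∈ outers Y, (X - C (_root_.content t)) : Kf[X]).Monic :=
    monic_prod_of_monic _ _ fun t _ => monic_X_sub_C _
  have hdegN : (∏ t ∈ outers Y, (X - C (_root_.content t)) : Kf[X]).natDegree = (outers Y).card := by
    rw [natDegree_prod_of_monic _ _ fun t _ => monic_X_sub_C _]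
    simp
  have hmonicP : ∀ s : ℕ × ℕ,
      (∏ s' ∈ (addables Y).erase s, (X - C (_root_.content s')) : Kf[X]).Monic :=
    fun s => monic_prod_of_monic _ _ fun t _ => monic_X_sub_C _
  have hdegP : ∀ s ∈ addables Y,
      (∏ s' ∈ (addables Y).erase s, (X - C (_root_.content s')) : Kf[X]).natDegree
        = (outers Y).card := by
    intro s hs
    rw [natDegree_prod_of_monic _ _ fun t _ => monic_X_sub_C _]
    simp [Finset.card_erase_of_mem hs, card_addables Y]
  apply eq_of_degrees_lt_of_eval_finset_eq ((addables Y).image _root_.content)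
  · rw [hcard, degree_eq_natDegree hmonicN.ne_zero, hdegN]
    exact_mod_cast Nat.lt_succ_self _
  · refine lt_of_le_of_lt (degree_sum_le _ _) ?_
    rw [Finset.sup_lt_iff (by rw [hcard]; exact WithBot.bot_lt_coe _)]
    intro s hs
    refine lt_of_le_of_lt (degree_mul_le _ _) ?_
    refine lt_of_le_of_lt (add_le_add degree_C_le (degree_le_natDegree)) ?_
    rw [hdegP s hs, hcard, zero_add]
    exact_mod_cast Nat.lt_succ_self _
  · intro x hx
    obtain ⟨s₀, hs₀, rfl⟩ := Finset.mem_image.mp hx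
    rw [eval_prod, eval_finset_sum]
    simp only [eval_mul, eval_prod, eval_sub, eval_X, eval_C]
    rw [Finset.sum_eq_single s₀]
    · rw [tau, div_mul_cancel₀ _ (_root_.prod_erase_ne_zero Y s₀)]
    · intro s hs hne
      rw [Finset.prod_eq_zero (Finset.mem_erase.mpr ⟨hne.symm, hs₀⟩) (by ring), mul_zero]
    · intro h; exact absurd hs₀ h

end

lemma tau_sum (Y : YoungDiagram) : ∑ s ∈ addables Y, tau Y s = 1 := by
  classical
  have h := congrArg (fun p : Polynomial Kf => p.coeff ((outers Y).card)) (key_identity Y)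
  simp only [Polynomial.finset_sum_coeff, Polynomial.coeff_C_mul] at h
  have hmonicN : (∏ t ∈ outers Y, (Polynomial.X - Polynomial.C (content t)) : (Polynomial Kf)).Monic :=
    Polynomial.monic_prod_of_monic _ _ fun t _ => Polynomial.monic_X_sub_C _
  have hdegN : (∏ t ∈ outers Y, (Polynomial.X - Polynomial.C (content t)) : (Polynomial Kf)).natDegree
      = (outers Y).card := by
    rw [Polynomial.natDegree_prod_of_monic _ _ fun t _ => Polynomial.monic_X_sub_C _]
    simp
  have hN1 : (∏ t ∈ outers Y, (Polynomial.X - Polynomial.C (content t)) : (Polynomial Kf)).coeff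
      ((outers Y).card) = 1 := by
    rw [← hdegN]; exact hmonicN.coeff_natDegree
  rw [hN1] at h
  have hP : ∀ s ∈ addables Y,
      (∏ s' ∈ (addables Y).erase s,
        (Polynomial.X - Polynomial.C (content s')) : (Polynomial Kf)).coeff ((outers Y).card) = 1 := by
    intro s hs
    have hm : (∏ s' ∈ (addables Y).erase s,
        (Polynomial.X - Polynomial.C (content s')) : (Polynomial Kf)).Monic :=
      Polynomial.monic_prod_of_monic _ _ fun t _ => Polynomial.monic_X_sub_C _
    have hd : (∏ s' ∈ (addables Y).erase s,
        (Polynomial.X - Polynomial.C (content s')) : (Polynomial Kf)).natDegree = (outers Y).card := by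
      rw [Polynomial.natDegree_prod_of_monic _ _ fun t _ => Polynomial.monic_X_sub_C _]
      simp [Finset.card_erase_of_mem hs, card_addables Y]
    rw [← hd]
    exact hm.coeff_natDegree
  rw [Finset.sum_congr rfl (fun s hs => by rw [hP s hs, mul_one])] at h
  exact h.symm

set_option maxHeartbeats 1000000 in
set_option synthInstance.maxHeartbeats 400000 in
lemma part2 (Y : YoungDiagram) :
    (∏ t ∈ outers Y, (RatFunc.X - RatFunc.C (content t))) /
        (∏ s ∈ addables Y, (RatFunc.X - RatFunc.C (content s))) =
      ∑ s ∈ addables Y,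
        RatFunc.C (tau Y s) / (RatFunc.X - RatFunc.C (content s)) := by
  classical
  set φ := algebraMap (Polynomial Kf) (RatFunc Kf) with hφ
  have hmap : ∀ a : Kf, RatFunc.X - RatFunc.C a = φ (Polynomial.X - Polynomial.C a) := by
    intro a
    rw [map_sub, RatFunc.algebraMap_X, RatFunc.algebraMap_C]
  have hterm : ∀ s ∈ addables Y,
      RatFunc.C (tau Y s) / (RatFunc.X - RatFunc.C (content s)) =
        φ (Polynomial.C (tau Y s) *
          ∏ s' ∈ (addables Y).erase s, (Polynomial.X - Polynomial.C (content s'))) /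
        φ (∏ s ∈ addables Y, (Polynomial.X - Polynomial.C (content s))) := by
    intro s hs
    have hD : (∏ s' ∈ addables Y, (Polynomial.X - Polynomial.C (content s')) : (Polynomial Kf)) =
        (Polynomial.X - Polynomial.C (content s)) *
          ∏ s' ∈ (addables Y).erase s, (Polynomial.X - Polynomial.C (content s')) :=
      (Finset.mul_prod_erase _ _ hs).symm
    have hPne : φ (∏ s' ∈ (addables Y).erase s,
        (Polynomial.X - Polynomial.C (content s'))) ≠ 0 :=
      RatFunc.algebraMap_ne_zero
        (Polynomial.monic_prod_of_monic _ _ fun t _ => Polynomial.monic_X_sub_C _).ne_zero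
    rw [hD, map_mul, map_mul, mul_div_mul_right _ _ hPne, hmap, ← RatFunc.algebraMap_C]
  rw [Finset.sum_congr rfl hterm, ← Finset.sum_div, ← map_sum, ← key_identity Y]
  rw [show (∏ t ∈ outers Y, (RatFunc.X - RatFunc.C (content t))) =
      φ (∏ t ∈ outers Y, (Polynomial.X - Polynomial.C (content t))) by
    rw [map_prod]; exact Finset.prod_congr rfl fun t _ => hmap _]
  rw [show (∏ s ∈ addables Y, (RatFunc.X - RatFunc.C (content s))) =
      φ (∏ s ∈ addables Y, (Polynomial.X - Polynomial.C (content s))) by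
    rw [map_prod]; exact Finset.prod_congr rfl fun t _ => hmap _]


/-- for any partition `λ`, the co-transition measures sum to `1`:
`Σ_{s∈A_λ} τ_λ^s = 1`; equivalently, the partial fraction decomposition
`u⁻¹T_λ(u) = Σ_{s∈A_λ} τ_λ^s/(u-[s])` holds, where
`u⁻¹T_λ(u) = ∏_{t∈R⁺_λ}(u-[t])/∏_{s∈A_λ}(u-[s])`. -/
theorem tau_sum_to_one (Y : YoungDiagram) :
    (∑ s ∈ addables Y, tau Y s = 1) ∧
      (∏ t ∈ outers Y, (RatFunc.X - RatFunc.C (content t))) /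
          (∏ s ∈ addables Y, (RatFunc.X - RatFunc.C (content s))) =
        ∑ s ∈ addables Y,
          RatFunc.C (tau Y s) / (RatFunc.X - RatFunc.C (content s)) :=
  ⟨tau_sum Y, part2 Y⟩

end
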